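/- (Lemma 3.6 (iv)) Let p > 5 be a prime and D an integer with D ≡ 0 (mod p) and D ≢ 0 (mod p²). Then the map [a,b,c] ↦ [a/p, b, pc] sends L_p(D) into L(D), is compatible with the equivalence relations (Γ₀(p)-equivalent forms are sent to SL₂(ℤ)-equivalent forms), and induces a one-to-one correspondence between the set L_p(D)/Γ₀(p) of Γ₀(p)-equivalence classes of forms in L_p(D) and the set L(D)/SL₂(ℤ) of SL₂(ℤ)-equivalence classes of forms in L(D). -/

import Mathlib

open Matrix Finset

abbrev SL2Z := Matrix.SpecialLinearGroup (Fin 2) ℤ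

/-- `IsForm D Q` says that the triple `Q = (a, b, c)` is a primitive integral binary
quadratic form `a x² + b x y + c y²` of discriminant `b² − 4 a c = D`. -/
def IsForm (D : ℤ) (Q : ℤ × ℤ × ℤ) : Prop :=
  Int.gcd Q.1 (Int.gcd Q.2.1 Q.2.2) = 1 ∧ Q.2.1 ^ 2 - 4 * Q.1 * Q.2.2 = D

/-- The right action of `M = (α β; γ δ) ∈ SL₂(ℤ)` on a binary quadratic form
`Q = (a, b, c)`, given by `(Q ∘ M)(x, y) = Q (α x + β y, γ x + δ y)`. -/
def actForm (M : SL2Z) (Q : ℤ × ℤ × ℤ) : ℤ × ℤ × ℤ :=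
  (Q.1 * (M.1 0 0) ^ 2 + Q.2.1 * (M.1 0 0) * (M.1 1 0) + Q.2.2 * (M.1 1 0) ^ 2,
   2 * Q.1 * (M.1 0 0) * (M.1 0 1) + Q.2.1 * ((M.1 0 0) * (M.1 1 1) + (M.1 0 1) * (M.1 1 0)) +
     2 * Q.2.2 * (M.1 1 0) * (M.1 1 1),
   Q.1 * (M.1 0 1) ^ 2 + Q.2.1 * (M.1 0 1) * (M.1 1 1) + Q.2.2 * (M.1 1 1) ^ 2)

/-- `L(D)`: the set of primitive integral binary quadratic forms of discriminant `D`. -/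
def Lset (D : ℤ) : Set (ℤ × ℤ × ℤ) := {Q | IsForm D Q}

/-- `L_N(D)`: the subset of `L(D)` consisting of forms `(a, b, c)` with `N ∣ a`. -/
def Lp (N : ℕ) (D : ℤ) : Set (ℤ × ℤ × ℤ) := {Q | IsForm D Q ∧ (N : ℤ) ∣ Q.1}

/-- `SL₂(ℤ)`-equivalence of binary quadratic forms. -/
def relSL (Q Q' : ℤ × ℤ × ℤ) : Prop := ∃ M : SL2Z, actForm M Q = Q'

/-- `Γ₀(N)`-equivalence of binary quadratic forms: equivalence under a matrix in `SL₂(ℤ)`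
whose lower-left entry is divisible by `N`. -/
def relG0 (N : ℕ) (Q Q' : ℤ × ℤ × ℤ) : Prop :=
  ∃ M : SL2Z, (N : ℤ) ∣ M.1 1 0 ∧ actForm M Q = Q'

/-- The map `[a, b, c] ↦ [a/p, b, p·c]`. -/
def pushp (p : ℕ) (Q : ℤ × ℤ × ℤ) : ℤ × ℤ × ℤ := (Q.1 / p, Q.2.1, (p : ℤ) * Q.2.2)

lemma actForm_mul (M N : SL2Z) (Q : ℤ × ℤ × ℤ) :
    actForm N (actForm M Q) = actForm (M * N) Q := by
  have h : ∀ i j, (M * N).1 i j = M.1 i 0 * N.1 0 j + M.1 i 1 * N.1 1 j := by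
    intro i j
    simp [Matrix.SpecialLinearGroup.coe_mul, Matrix.mul_apply, Fin.sum_univ_two]
  obtain ⟨a, b, c⟩ := Q
  simp only [actForm, h, Prod.mk.injEq]
  refine ⟨by ring, by ring, by ring⟩

lemma actForm_one (Q : ℤ × ℤ × ℤ) : actForm 1 Q = Q := by
  obtain ⟨a, b, c⟩ := Q
  simp [actForm]

lemma relSL_refl (Q : ℤ × ℤ × ℤ) : relSL Q Q := ⟨1, actForm_one Q⟩

lemma relSL_symm {Q Q' : ℤ × ℤ × ℤ} (h : relSL Q Q') : relSL Q' Q := by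
  obtain ⟨M, hM⟩ := h
  exact ⟨M⁻¹, by rw [← hM, actForm_mul, mul_inv_cancel, actForm_one]⟩

lemma relSL_trans {Q Q' Q'' : ℤ × ℤ × ℤ} (h : relSL Q Q') (h' : relSL Q' Q'') : relSL Q Q'' := by
  obtain ⟨M, hM⟩ := h; obtain ⟨N, hN⟩ := h'
  exact ⟨M * N, by rw [← actForm_mul, hM, hN]⟩

lemma dvd_actForm {d : ℤ} {Q : ℤ × ℤ × ℤ} (M : SL2Z) (h1 : d ∣ Q.1) (h2 : d ∣ Q.2.1)
    (h3 : d ∣ Q.2.2) : d ∣ (actForm M Q).1 ∧ d ∣ (actForm M Q).2.1 ∧ d ∣ (actForm M Q).2.2 := by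
  obtain ⟨a, ha⟩ := h1; obtain ⟨b, hb⟩ := h2; obtain ⟨c, hc⟩ := h3
  obtain ⟨a0, b0, c0⟩ := Q
  simp only [actForm] at *
  subst ha hb hc
  refine ⟨⟨a * M.1 0 0 ^ 2 + b * M.1 0 0 * M.1 1 0 + c * M.1 1 0 ^ 2, by ring⟩,
    ⟨2 * a * M.1 0 0 * M.1 0 1 + b * (M.1 0 0 * M.1 1 1 + M.1 0 1 * M.1 1 0) +
      2 * c * M.1 1 0 * M.1 1 1, by ring⟩,
    ⟨a * M.1 0 1 ^ 2 + b * M.1 0 1 * M.1 1 1 + c * M.1 1 1 ^ 2, by ring⟩⟩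


lemma gcd3_eq_one {a b c : ℤ} (h : ∀ q : ℕ, q.Prime → ¬ ((q:ℤ) ∣ a ∧ (q:ℤ) ∣ b ∧ (q:ℤ) ∣ c)) :
    Int.gcd a (Int.gcd b c) = 1 := by
  by_contra hg
  obtain ⟨q, hq, hqd⟩ := Nat.exists_prime_and_dvd hg
  have h1 : (q:ℤ) ∣ (Int.gcd a (Int.gcd b c) : ℤ) := Int.natCast_dvd_natCast.mpr hqd
  have h2 : (q:ℤ) ∣ a := h1.trans (Int.gcd_dvd_left _ _)
  have h3 : (q:ℤ) ∣ ((Int.gcd b c : ℕ) : ℤ) := h1.trans (Int.gcd_dvd_right _ _)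
  exact h q hq ⟨h2, h3.trans (Int.gcd_dvd_left _ _), h3.trans (Int.gcd_dvd_right _ _)⟩

lemma lp_facts {p : ℕ} (hp : p.Prime) {D : ℤ} (hD : (p:ℤ) ∣ D)
    (hD2 : ¬ (p:ℤ)^2 ∣ D) {Q : ℤ × ℤ × ℤ} (hQ : Q ∈ Lp p D) :
    ∃ a₁, Q.1 = p * a₁ ∧ ¬ (p:ℤ) ∣ a₁ ∧ (p:ℤ) ∣ Q.2.1 ∧ ¬ (p:ℤ) ∣ Q.2.2 := by
  obtain ⟨⟨hg, hdisc⟩, a₁, ha⟩ := hQ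
  have hpz : Prime (p:ℤ) := Nat.prime_iff_prime_int.mp hp
  have hb : (p:ℤ) ∣ Q.2.1 := by
    refine hpz.dvd_of_dvd_pow (n := 2) ?_
    have : Q.2.1 ^ 2 = D + 4 * Q.1 * Q.2.2 := by linarith [hdisc]
    rw [this, ha]
    exact dvd_add (hD) ⟨4 * a₁ * Q.2.2, by ring⟩
  obtain ⟨b₁, hb₁⟩ := hb
  refine ⟨a₁, ha, ?_, ⟨b₁, hb₁⟩, ?_⟩
  · rintro ⟨a₂, ha₂⟩
    exact hD2 ⟨b₁^2 - 4 * a₂ * Q.2.2, by linear_combination -hdisc + Q.2.1 * hb₁ + hb₁ * (p*b₁) - 4 * Q.2.2 * ha - 4*(p:ℤ)*Q.2.2*ha₂⟩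
  · intro hc
    have h1 : (p:ℤ) ∣ (Int.gcd Q.2.1 Q.2.2 : ℤ) := Int.dvd_coe_gcd ⟨b₁, hb₁⟩ hc
    have h2 : (p:ℤ) ∣ (Int.gcd Q.1 (Int.gcd Q.2.1 Q.2.2) : ℤ) := Int.dvd_coe_gcd ⟨a₁, ha⟩ h1
    rw [hg] at h2
    have := Int.le_of_dvd one_pos h2
    have := hp.two_le
    omega

lemma not_dvd_all {a b c : ℤ} (hg : Int.gcd a (Int.gcd b c) = 1) {q : ℕ} (hq : q.Prime)
    (h1 : (q:ℤ) ∣ a) (h2 : (q:ℤ) ∣ b) (h3 : (q:ℤ) ∣ c) : False := by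
  have h4 : (q:ℤ) ∣ (Int.gcd a (Int.gcd b c) : ℤ) := Int.dvd_coe_gcd h1 (Int.dvd_coe_gcd h2 h3)
  rw [hg] at h4
  have := Int.le_of_dvd one_pos h4
  have := hq.two_le
  omega

lemma push_mem {p : ℕ} (hp : p.Prime) {D : ℤ} (hD : (p:ℤ) ∣ D)
    (hD2 : ¬ (p:ℤ)^2 ∣ D) {Q : ℤ × ℤ × ℤ} (hQ : Q ∈ Lp p D) : pushp p Q ∈ Lset D := by
  obtain ⟨a₁, ha, ha₁, hb, hc⟩ := lp_facts hp hD hD2 hQ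
  obtain ⟨⟨hg, hdisc⟩, -⟩ := hQ
  have hp0 : (p:ℤ) ≠ 0 := Int.natCast_ne_zero.mpr hp.ne_zero
  have hdiv : Q.1 / (p:ℤ) = a₁ := by rw [ha, Int.mul_ediv_cancel_left _ hp0]
  have hpz : Prime (p:ℤ) := Nat.prime_iff_prime_int.mp hp
  constructor
  · -- primitivity
    show Int.gcd (Q.1/(p:ℤ)) (Int.gcd Q.2.1 ((p:ℤ) * Q.2.2)) = 1
    rw [hdiv]
    refine gcd3_eq_one ?_
    rintro q hq ⟨h1, h2, h3⟩
    have hqz : Prime (q:ℤ) := Nat.prime_iff_prime_int.mp hq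
    have hqp : q ≠ p := by
      rintro rfl
      exact ha₁ h1
    have h3' : (q:ℤ) ∣ Q.2.2 := by
      rcases hqz.dvd_mul.mp h3 with h | h
      · exact absurd ((Nat.prime_dvd_prime_iff_eq hq hp).mp (Int.natCast_dvd_natCast.mp h)) hqp
      · exact h
    exact not_dvd_all hg hq (ha ▸ h1.mul_left (p:ℤ)) h2 h3'
  · show Q.2.1 ^ 2 - 4 * (Q.1/(p:ℤ)) * ((p:ℤ) * Q.2.2) = D
    rw [hdiv]
    linear_combination hdisc + 4 * Q.2.2 * ha


lemma pdiv {p : ℕ} (hp0 : (p:ℤ) ≠ 0) {X Y : ℤ} (h : X = (p:ℤ) * Y) : X / (p:ℤ) = Y := by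
  rw [h, Int.mul_ediv_cancel_left _ hp0]

lemma push_compat {p : ℕ} (hp : p.Prime) {D : ℤ} (hD : (p:ℤ) ∣ D)
    (hD2 : ¬ (p:ℤ)^2 ∣ D) {Q Q' : ℤ × ℤ × ℤ} (hQ : Q ∈ Lp p D)
    (h : relG0 p Q Q') : relSL (pushp p Q) (pushp p Q') := by
  obtain ⟨M, ⟨g1, hg1⟩, hact⟩ := h
  obtain ⟨a₁, ha, ha₁, hb, hc⟩ := lp_facts hp hD hD2 hQ
  have hp0 : (p:ℤ) ≠ 0 := Int.natCast_ne_zero.mpr hp.ne_zero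
  subst hact
  set α := M.1 0 0 with hα
  set β := M.1 0 1 with hβ
  set γ := M.1 1 0 with hγ
  set δ := M.1 1 1 with hδ
  have hdet : α * δ - β * γ = 1 := by
    have := M.2
    rw [Matrix.det_fin_two] at this
    linarith [this]
  refine ⟨⟨!![α, (p:ℤ) * β; g1, δ], ?_⟩, ?_⟩
  · rw [Matrix.det_fin_two_of]
    linear_combination hdet + β * hg1
  · have e1 : (actForm M Q).1 / (p:ℤ) = a₁ * α^2 + Q.2.1 * α * g1 + (p:ℤ) * Q.2.2 * g1^2 := by
      refine pdiv hp0 ?_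
      show Q.1 * α^2 + Q.2.1 * α * γ + Q.2.2 * γ^2 = _
      linear_combination α^2 * ha + (Q.2.1 * α + Q.2.2 * (γ + (p:ℤ)*g1)) * hg1
    have e0 : Q.1 / (p:ℤ) = a₁ := pdiv hp0 ha
    show actForm _ (Q.1 / (p:ℤ), Q.2.1, (p:ℤ) * Q.2.2) = ((actForm M Q).1 / (p:ℤ), _, _)
    rw [e0, e1]
    simp only [actForm, Matrix.cons_val', Matrix.cons_val_zero, Matrix.empty_val',
      Matrix.cons_val_fin_one, Matrix.cons_val_one, Matrix.head_cons, Matrix.head_fin_const,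
      Matrix.of_apply, Prod.mk.injEq]
    refine ⟨by trivial, ?_, ?_⟩
    · show _ = 2 * Q.1 * α * β + Q.2.1 * (α * δ + β * γ) + 2 * Q.2.2 * γ * δ
      linear_combination (-2 * α * β) * ha - (Q.2.1 * β + 2 * Q.2.2 * δ) * hg1
    · show _ = (p:ℤ) * (Q.1 * β^2 + Q.2.1 * β * δ + Q.2.2 * δ^2)
      linear_combination -β^2 * (p:ℤ) * ha

lemma push_inj {p : ℕ} (hp : p.Prime) {D : ℤ} (hD : (p:ℤ) ∣ D)
    (hD2 : ¬ (p:ℤ)^2 ∣ D) {Q Q' : ℤ × ℤ × ℤ} (hQ : Q ∈ Lp p D) (hQ' : Q' ∈ Lp p D)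
    (h : relSL (pushp p Q) (pushp p Q')) : relG0 p Q Q' := by
  obtain ⟨N, hN⟩ := h
  obtain ⟨a₁, ha, ha₁, hb, hc⟩ := lp_facts hp hD hD2 hQ
  obtain ⟨a₁', ha', ha₁', hb', hc'⟩ := lp_facts hp hD hD2 hQ'
  have hp0 : (p:ℤ) ≠ 0 := Int.natCast_ne_zero.mpr hp.ne_zero
  have hpz : Prime (p:ℤ) := Nat.prime_iff_prime_int.mp hp
  set α := N.1 0 0 with hα
  set β := N.1 0 1 with hβ
  set γ := N.1 1 0 with hγ
  set δ := N.1 1 1 with hδ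
  have hdet : α * δ - β * γ = 1 := by
    have := N.2
    rw [Matrix.det_fin_two] at this
    linarith [this]
  have e0 : Q.1 / (p:ℤ) = a₁ := pdiv hp0 ha
  have e0' : Q'.1 / (p:ℤ) = a₁' := pdiv hp0 ha'
  rw [show pushp p Q = (a₁, Q.2.1, (p:ℤ) * Q.2.2) by rw [← e0]; rfl,
      show pushp p Q' = (a₁', Q'.2.1, (p:ℤ) * Q'.2.2) by rw [← e0']; rfl] at hN
  have h1 : a₁ * α^2 + Q.2.1 * α * γ + (p:ℤ) * Q.2.2 * γ^2 = a₁' :=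
    congrArg Prod.fst hN
  have h2 : 2 * a₁ * α * β + Q.2.1 * (α * δ + β * γ) + 2 * ((p:ℤ) * Q.2.2) * γ * δ = Q'.2.1 :=
    congrArg (fun t => t.2.1) hN
  have h3 : a₁ * β^2 + Q.2.1 * β * δ + (p:ℤ) * Q.2.2 * δ^2 = (p:ℤ) * Q'.2.2 :=
    congrArg (fun t => t.2.2) hN
  obtain ⟨b₁, hb₁⟩ := hb
  have hpβ : (p:ℤ) ∣ β := by
    have : (p:ℤ) ∣ a₁ * β^2 := by
      refine ⟨Q'.2.2 - b₁ * β * δ - Q.2.2 * δ^2, ?_⟩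
      linear_combination h3 - β * δ * hb₁
    rcases hpz.dvd_mul.mp this with h | h
    · exact absurd h ha₁
    · exact hpz.dvd_of_dvd_pow h
  obtain ⟨β₁, hβ₁⟩ := hpβ
  refine ⟨⟨!![α, β₁; (p:ℤ) * γ, δ], ?_⟩, ⟨γ, rfl⟩, ?_⟩
  · rw [Matrix.det_fin_two_of]
    linear_combination hdet + γ * hβ₁
  · have g1 : Q.1 * α^2 + Q.2.1 * α * ((p:ℤ) * γ) + Q.2.2 * ((p:ℤ) * γ)^2 = Q'.1 := by
      linear_combination (p:ℤ) * h1 + α^2 * ha - ha'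
    have g2 : 2 * Q.1 * α * β₁ + Q.2.1 * (α * δ + β₁ * ((p:ℤ) * γ)) + 2 * Q.2.2 * ((p:ℤ) * γ) * δ
        = Q'.2.1 := by
      have hple : (p:ℤ) * (2 * Q.1 * α * β₁ + Q.2.1 * (α * δ + β₁ * ((p:ℤ) * γ)) +
          2 * Q.2.2 * ((p:ℤ) * γ) * δ) = (p:ℤ) * Q'.2.1 := by
        linear_combination (p:ℤ) * h2 + 2 * (p:ℤ) * α * β₁ * ha
          - (2 * (p:ℤ) * a₁ * α + (p:ℤ) * Q.2.1 * γ) * hβ₁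
      exact mul_left_cancel₀ hp0 hple
    have g3 : Q.1 * β₁^2 + Q.2.1 * β₁ * δ + Q.2.2 * δ^2 = Q'.2.2 := by
      have hple : (p:ℤ) * (Q.1 * β₁^2 + Q.2.1 * β₁ * δ + Q.2.2 * δ^2) = (p:ℤ) * Q'.2.2 := by
        linear_combination h3 + (p:ℤ) * β₁^2 * ha - (a₁ * (β + (p:ℤ) * β₁) + Q.2.1 * δ) * hβ₁
      exact mul_left_cancel₀ hp0 hple
    show (Q.1 * α^2 + Q.2.1 * α * ((p:ℤ)*γ) + Q.2.2 * ((p:ℤ)*γ)^2, _, _) = _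
    exact Prod.ext g1 (Prod.ext g2 g3)

lemma act_mem {D : ℤ} (M : SL2Z) {Q : ℤ × ℤ × ℤ} (hQ : Q ∈ Lset D) : actForm M Q ∈ Lset D := by
  obtain ⟨hg, hdisc⟩ := hQ
  set α := M.1 0 0
  set β := M.1 0 1
  set γ := M.1 1 0
  set δ := M.1 1 1
  have hdet : α * δ - β * γ = 1 := by
    have := M.2
    rw [Matrix.det_fin_two] at this
    linarith [this]
  constructor
  · -- primitivity
    refine gcd3_eq_one ?_
    rintro q hq ⟨h1, h2, h3⟩
    obtain ⟨d1, d2, d3⟩ := dvd_actForm (d := (q:ℤ)) M⁻¹ h1 h2 h3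
    rw [actForm_mul, mul_inv_cancel, actForm_one] at d1 d2 d3
    exact not_dvd_all hg hq d1 d2 d3
  · show (actForm M Q).2.1 ^ 2 - 4 * (actForm M Q).1 * (actForm M Q).2.2 = D
    simp only [actForm]
    linear_combination (α * δ - β * γ)^2 * hdisc + D * (α * δ - β * γ + 1) * hdet

lemma exists_rep {p : ℕ} (hp : p.Prime) (hp2 : p ≠ 2) {D : ℤ} (hD : (p:ℤ) ∣ D)
    {R : ℤ × ℤ × ℤ} (hR : R ∈ Lset D) :
    ∃ M : SL2Z, (p:ℤ) ∣ (actForm M R).2.2 := by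
  obtain ⟨hg, hdisc⟩ := hR
  by_cases hA : (p:ℤ) ∣ R.1
  · refine ⟨⟨!![0, -1; 1, 0], by rw [Matrix.det_fin_two_of]; ring⟩, ?_⟩
    simpa [actForm] using hA
  · haveI := Fact.mk hp
    haveI : NeZero p := ⟨hp.ne_zero⟩
    set A : ZMod p := ((R.1 : ℤ) : ZMod p) with hA'
    set B : ZMod p := ((R.2.1 : ℤ) : ZMod p) with hB'
    set C : ZMod p := ((R.2.2 : ℤ) : ZMod p) with hC'
    have hA0 : A ≠ 0 := fun h => hA ((ZMod.intCast_zmod_eq_zero_iff_dvd _ _).mp h)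
    have h20 : (2 : ZMod p) ≠ 0 := by
      intro h
      have h2 : p ∣ 2 := (ZMod.natCast_eq_zero_iff 2 p).mp (by exact_mod_cast h)
      exact hp2 ((Nat.prime_dvd_prime_iff_eq hp Nat.prime_two).mp h2)
    set x : ZMod p := - B / (2 * A) with hx
    set x0 : ℤ := (x.val : ℤ) with hx0
    refine ⟨⟨!![1, x0; 0, 1], by rw [Matrix.det_fin_two_of]; ring⟩, ?_⟩
    have key : (p:ℤ) ∣ R.1 * x0^2 + R.2.1 * x0 + R.2.2 := by
      rw [← ZMod.intCast_zmod_eq_zero_iff_dvd]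
      push_cast
      have hxv : ((x0 : ℤ) : ZMod p) = x := by
        rw [hx0]
        push_cast [ZMod.natCast_val, ZMod.cast_id]
        ring
      rw [hxv]
      have hD0 : ((D : ℤ) : ZMod p) = 0 := (ZMod.intCast_zmod_eq_zero_iff_dvd D p).mpr hD
      have hdisc0 : B^2 - 4*A*C = 0 := by
        have hcast := congrArg (fun t : ℤ => ((t : ℤ) : ZMod p)) hdisc
        push_cast at hcast
        rw [hD0] at hcast
        exact hcast
      rw [hx]
      field_simp
      linear_combination (-A) * hdisc0
    simpa [actForm] using key

lemma pull_mem {p : ℕ} (hp : p.Prime) {D : ℤ} (hD : (p:ℤ) ∣ D) (hD2 : ¬ (p:ℤ)^2 ∣ D)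
    {R' : ℤ × ℤ × ℤ} (hR' : R' ∈ Lset D) (hcc : (p:ℤ) ∣ R'.2.2) :
    ((p:ℤ) * R'.1, R'.2.1, R'.2.2 / (p:ℤ)) ∈ Lp p D ∧
      pushp p ((p:ℤ) * R'.1, R'.2.1, R'.2.2 / (p:ℤ)) = R' := by
  obtain ⟨hg, hdisc⟩ := hR'
  have hp0 : (p:ℤ) ≠ 0 := Int.natCast_ne_zero.mpr hp.ne_zero
  have hpz : Prime (p:ℤ) := Nat.prime_iff_prime_int.mp hp
  obtain ⟨c₁, hc₁⟩ := hcc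
  have hdivc : R'.2.2 / (p:ℤ) = c₁ := pdiv hp0 hc₁
  have hb : (p:ℤ) ∣ R'.2.1 := by
    refine hpz.dvd_of_dvd_pow (n := 2) ?_
    have : R'.2.1 ^ 2 = D + 4 * R'.1 * R'.2.2 := by linarith [hdisc]
    rw [this, hc₁]
    exact dvd_add hD ⟨4 * R'.1 * c₁, by ring⟩
  obtain ⟨b₁, hb₁⟩ := hb
  refine ⟨⟨⟨?_, ?_⟩, ⟨R'.1, rfl⟩⟩, ?_⟩
  · -- primitivity
    show Int.gcd ((p:ℤ) * R'.1) (Int.gcd R'.2.1 (R'.2.2 / (p:ℤ))) = 1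
    rw [hdivc]
    refine gcd3_eq_one ?_
    rintro q hq ⟨h1, h2, h3⟩
    have hqz : Prime (q:ℤ) := Nat.prime_iff_prime_int.mp hq
    by_cases hqp : q = p
    · subst hqp
      obtain ⟨c₂, hc₂⟩ := h3
      exact hD2 ⟨b₁^2 - 4 * R'.1 * c₂, by
        linear_combination -hdisc + (R'.2.1 + (q:ℤ)*b₁)*hb₁ - 4*R'.1*hc₁ - 4*(q:ℤ)*R'.1*hc₂⟩
    · have h1' : (q:ℤ) ∣ R'.1 := by
        rcases hqz.dvd_mul.mp h1 with h | h
        · exact absurd ((Nat.prime_dvd_prime_iff_eq hq hp).mp (Int.natCast_dvd_natCast.mp h)) hqp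
        · exact h
      exact not_dvd_all hg hq h1' h2 (hc₁ ▸ h3.mul_left (p:ℤ))
  · show R'.2.1 ^ 2 - 4 * ((p:ℤ) * R'.1) * (R'.2.2 / (p:ℤ)) = D
    rw [hdivc]
    linear_combination hdisc + 4 * R'.1 * hc₁
  · show (((p:ℤ) * R'.1) / (p:ℤ), R'.2.1, (p:ℤ) * (R'.2.2 / (p:ℤ))) = R'
    rw [hdivc, Int.mul_ediv_cancel_left _ hp0, ← hc₁]

/-- Lemma 3.6 (iv): if `p ∣ D` and `p² ∤ D`, the map
`[a,b,c] ↦ [a/p, b, pc]` sends `L_p(D)` into `L(D)`, is compatible with the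
equivalence relations, and induces a bijection `L_p(D)/Γ₀(p) ≃ L(D)/SL₂(ℤ)`. -/
theorem statement8 (p : ℕ) (hp : Nat.Prime p) (hp5 : 5 < p) (D : ℤ)
    (hD : (p : ℤ) ∣ D) (hD2 : ¬ (p : ℤ) ^ 2 ∣ D) :
    (∀ Q ∈ Lp p D, pushp p Q ∈ Lset D) ∧
    (∀ Q ∈ Lp p D, ∀ Q' ∈ Lp p D,
      relG0 p Q Q' → relSL (pushp p Q) (pushp p Q')) ∧
    ∃ F : Quot (fun Q Q' : Lp p D => relG0 p Q.1 Q'.1) →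
        Quot (fun R R' : Lset D => relSL R.1 R'.1),
      (∀ Q : Lp p D, ∀ h : pushp p Q.1 ∈ Lset D,
        F (Quot.mk _ Q) = Quot.mk _ ⟨pushp p Q.1, h⟩) ∧
      Function.Bijective F := by
  have hp0 : (p:ℤ) ≠ 0 := Int.natCast_ne_zero.mpr hp.ne_zero
  have hp2 : p ≠ 2 := by omega
  have heq : Equivalence (fun R R' : Lset D => relSL R.1 R'.1) :=
    ⟨fun R => relSL_refl _, fun h => relSL_symm h, fun h h' => relSL_trans h h'⟩
  refine ⟨fun Q hQ => push_mem hp hD hD2 hQ,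
    fun Q hQ Q' hQ' h => push_compat hp hD hD2 hQ h, ?_⟩
  refine ⟨Quot.lift
      (fun Q : Lp p D => Quot.mk (fun R R' : Lset D => relSL R.1 R'.1)
        (⟨pushp p Q.1, push_mem hp hD hD2 Q.2⟩ : Lset D))
      (fun Q Q' h => Quot.sound (push_compat hp hD hD2 Q.2 h)),
    fun Q h => rfl, ?_, ?_⟩
  · intro x y
    induction' x using Quot.ind with Q
    induction' y using Quot.ind with Q'
    intro hxy
    have h1 : relSL (pushp p Q.1) (pushp p Q'.1) := heq.eqvGen_iff.mp (Quot.eq.mp hxy)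
    exact Quot.sound (push_inj hp hD hD2 Q.2 Q'.2 h1)
  · intro y
    induction' y using Quot.ind with R
    obtain ⟨M, hM⟩ := exists_rep hp hp2 hD R.2
    have hR' : actForm M R.1 ∈ Lset D := act_mem M R.2
    obtain ⟨hQmem, hpush⟩ := pull_mem hp hD hD2 hR' hM
    refine ⟨Quot.mk _ (⟨_, hQmem⟩ : Lp p D), ?_⟩
    apply Quot.sound
    show relSL (pushp p _) R.1
    rw [hpush]
    exact relSL_symm ⟨M, rfl⟩
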